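/- For even integers n and p with 0 < p ≤ n, the ratio C(n/2, p/2)² / C(n, p) is at least 1/p. Equivalently, the probability that a uniformly random binary vector of length n and Hamming weight p has exactly p/2 ones in each half is at least 1/p. -/

import Mathlib

/-!
Vandermonde's identity writes `C(2m, 2k)` as the sum of the `2k + 1` products `C(m, i) C(m, 2k - i)`.
By log-concavity of `i ↦ C(m, i)` each product is at most `C(m, k)²`; moreover the two end terms
together contribute `2 C(m, 2k) ≤ C(2k, k) C(m, 2k) = C(m, k) C(m - k, k) ≤ C(m, k)²`,
so the whole sum is at most `2k C(m, k)²`.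
-/

open Finset

namespace Nat

theorem choose_mul_choose_succ_le (m : ℕ) {a b : ℕ} (hab : a ≤ b) :
    m.choose a * m.choose (b + 1) ≤ m.choose (a + 1) * m.choose b := by
  rcases le_or_gt (b + 1) m with hbm | hbm
  · refine Nat.le_of_mul_le_mul_right ?_ (by positivity : 0 < (a + 1) * (b + 1))
    calc m.choose a * m.choose (b + 1) * ((a + 1) * (b + 1))
        = m.choose a * m.choose b * ((a + 1) * (m - b)) := by
          rw [mul_mul_mul_comm, choose_succ_right_eq]; ring
      _ ≤ m.choose a * m.choose b * ((b + 1) * (m - a)) := by gcongr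
      _ = m.choose (a + 1) * m.choose b * ((a + 1) * (b + 1)) := by
          rw [mul_mul_mul_comm _ _ (a + 1), choose_succ_right_eq]; ring
  · simp [choose_eq_zero_of_lt hbm]

theorem choose_mul_choose_add_two_mul_le_sq (m a d : ℕ) :
    m.choose a * m.choose (a + 2 * d) ≤ m.choose (a + d) ^ 2 := by
  induction d generalizing a with
  | zero => simp [sq]
  | succ d ih =>
    calc m.choose a * m.choose (a + 2 * (d + 1))
        = m.choose a * m.choose (a + 2 * d + 1 + 1) := by ring_nf
      _ ≤ m.choose (a + 1) * m.choose (a + 2 * d + 1) := choose_mul_choose_succ_le m (by omega)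
      _ = m.choose (a + 1) * m.choose (a + 1 + 2 * d) := by ring_nf
      _ ≤ m.choose (a + 1 + d) ^ 2 := ih (a + 1)
      _ = m.choose (a + (d + 1)) ^ 2 := by ring_nf

theorem choose_mul_choose_le_sq_of_add_eq (m : ℕ) {i j k : ℕ} (h : i + j = 2 * k) :
    m.choose i * m.choose j ≤ m.choose k ^ 2 := by
  wlog hij : i ≤ j generalizing i j
  · rw [mul_comm]
    exact this (by omega) (by omega)
  obtain ⟨d, rfl⟩ : ∃ d, k = i + d := ⟨k - i, by omega⟩
  obtain rfl : j = i + 2 * d := by omega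
  exact choose_mul_choose_add_two_mul_le_sq m i d

theorem two_mul_choose_two_mul_le_sq (m : ℕ) {k : ℕ} (hk : 0 < k) :
    2 * m.choose (2 * k) ≤ m.choose k ^ 2 :=
  calc 2 * m.choose (2 * k) ≤ (2 * k).choose k * m.choose (2 * k) := by
        gcongr
        exact two_le_centralBinom k hk
    _ = m.choose k * (m - k).choose k := by
        rw [mul_comm, choose_mul (by omega), two_mul, Nat.add_sub_cancel]
    _ ≤ m.choose k ^ 2 := by
        rw [sq]
        exact Nat.mul_le_mul_left _ (choose_le_choose k (sub_le m k))

theorem choose_two_mul_le (m : ℕ) {k : ℕ} (hk : 0 < k) :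
    (2 * m).choose (2 * k) ≤ 2 * k * m.choose k ^ 2 := by
  obtain ⟨j, rfl⟩ : ∃ j, k = j + 1 := ⟨k - 1, by omega⟩
  have hends := two_mul_choose_two_mul_le_sq m hk
  have hmiddle : ∑ p ∈ antidiagonal (2 * j), m.choose (p.1 + 1) * m.choose (p.2 + 1)
      ≤ (2 * j + 1) * m.choose (j + 1) ^ 2 :=
    calc _ ≤ ∑ _p ∈ antidiagonal (2 * j), m.choose (j + 1) ^ 2 :=
          sum_le_sum fun p hp ↦
            choose_mul_choose_le_sq_of_add_eq m (by rw [HasAntidiagonal.mem_antidiagonal] at hp; omega)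
      _ = _ := by rw [sum_const, Finset.Nat.card_antidiagonal, smul_eq_mul]
  calc (2 * m).choose (2 * (j + 1))
      = ∑ p ∈ antidiagonal (2 * j + 1 + 1), m.choose p.1 * m.choose p.2 := by
        rw [two_mul m, add_choose_eq]; ring_nf
    _ = 2 * m.choose (2 * (j + 1))
          + ∑ p ∈ antidiagonal (2 * j), m.choose (p.1 + 1) * m.choose (p.2 + 1) := by
        rw [Finset.Nat.sum_antidiagonal_succ, Finset.Nat.sum_antidiagonal_succ']
        simp only [choose_zero_right]
        ring_nf
    _ ≤ 2 * (j + 1) * m.choose (j + 1) ^ 2 := by linarith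

end Nat

theorem stmt_4_general (n p : ℕ) (hn : Even n) (hp : Even p) (hp0 : 0 < p) :
    n.choose p ≤ p * ((n / 2).choose (p / 2)) ^ 2 := by
  obtain ⟨m, rfl⟩ := hn.two_dvd
  obtain ⟨k, rfl⟩ := hp.two_dvd
  rw [Nat.mul_div_cancel_left m two_pos, Nat.mul_div_cancel_left k two_pos]
  exact Nat.choose_two_mul_le m (by omega)

theorem stmt_4 (n p : ℕ) (hn : Even n) (hp : Even p) (hp0 : 0 < p) (hpn : p ≤ n) :
    n.choose p ≤ p * ((n / 2).choose (p / 2)) ^ 2 :=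
  stmt_4_general n p hn hp hp0
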